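/- arXiv:2102.09696 — 3 statements merged into one kernel-verified Lean document; each statement's English description precedes it below -/
import Mathlib

section
/- Let G be a graph with vertices sorted so that d(v_1) ≥ d(v_2) ≥ ... ≥ d(v_n), and define m(G) = max{ i : d(v_i) ≥ i−1 }. Then χ_b(G) ≤ m(G). -/
open Finset SimpleGraph

variable {V : Type*}

/-- A proper coloring of `G` with color set `K`: every vertex receives a color in `K`
and adjacent vertices receive distinct colors. -/
def IsProperColoring (G : SimpleGraph V) (c : V → ℕ) (K : Finset ℕ) : Prop :=
  (∀ v, c v ∈ K) ∧ ∀ u v, G.Adj u v → c u ≠ c v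

/-- `v` is a b-vertex: every color of `K` other than `c v` appears on a neighbor of `v`. -/
def IsBVertex (G : SimpleGraph V) (c : V → ℕ) (K : Finset ℕ) (v : V) : Prop :=
  ∀ k ∈ K, k ≠ c v → ∃ u, G.Adj v u ∧ c u = k

/-- A b-coloring: a proper coloring in which every color has a b-vertex of that color. -/
def IsBColoring (G : SimpleGraph V) (c : V → ℕ) (K : Finset ℕ) : Prop :=
  IsProperColoring G c K ∧ ∀ k ∈ K, ∃ v, c v = k ∧ IsBVertex G c K v

/-- The b-chromatic number: the maximum number of colors of a b-coloring of `G`. -/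
noncomputable def bChromatic (G : SimpleGraph V) : ℕ :=
  sSup {k | ∃ c K, Finset.card K = k ∧ IsBColoring G c K}

/-- The chromatic number: the minimum number of colors of a proper coloring of `G`. -/
noncomputable def chromatic (G : SimpleGraph V) : ℕ :=
  sInf {k | ∃ c K, Finset.card K = k ∧ IsProperColoring G c K}

theorem stmt_4 [Fintype V] (G : SimpleGraph V) [DecidableRel G.Adj]
    (v : Fin (Fintype.card V) → V) (hbij : Function.Bijective v)
    (hsort : ∀ i j : Fin (Fintype.card V), i ≤ j → G.degree (v j) ≤ G.degree (v i)) :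
    bChromatic G ≤
      sSup {k | ∃ i : Fin (Fintype.card V), k = (i : ℕ) + 1 ∧ (i : ℕ) ≤ G.degree (v i)} := by
  apply csSup_le'
  rintro m ⟨c, K, rfl, hprop, hb⟩
  rcases Nat.eq_zero_or_pos K.card with h0 | hpos
  · simp [h0]
  obtain ⟨k0, hk0⟩ := Finset.card_pos.mp hpos
  obtain ⟨x0, hx0, -⟩ := hb k0 hk0
  haveI : Nonempty V := ⟨x0⟩
  have hb' : ∀ k : ℕ, ∃ x : V, k ∈ K → c x = k ∧ IsBVertex G c K x := by
    intro k
    by_cases h : k ∈ K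
    · obtain ⟨x, hx⟩ := hb k h; exact ⟨x, fun _ => hx⟩
    · exact ⟨Classical.arbitrary V, fun hk => absurd hk h⟩
  choose w hw using hb'
  have hdeg : ∀ x : V, IsBVertex G c K x → K.card - 1 ≤ G.degree x := by
    intro x hx
    have hsub : K.erase (c x) ⊆ (G.neighborFinset x).image c := by
      intro k hk
      obtain ⟨u, hu, hcu⟩ := hx k (Finset.mem_of_mem_erase hk) (Finset.ne_of_mem_erase hk)
      exact Finset.mem_image.mpr ⟨u, (G.mem_neighborFinset x u).mpr hu, hcu⟩
    calc K.card - 1 = (K.erase (c x)).card := (Finset.card_erase_of_mem (hprop.1 x)).symm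
      _ ≤ ((G.neighborFinset x).image c).card := Finset.card_le_card hsub
      _ ≤ (G.neighborFinset x).card := Finset.card_image_le
      _ = G.degree x := G.card_neighborFinset_eq_degree x
  set e := Equiv.ofBijective v hbij with he
  set T : Finset (Fin (Fintype.card V)) := Finset.univ.filter (fun i => K.card - 1 ≤ G.degree (v i)) with hT
  have hcard : K.card ≤ T.card := by
    apply Finset.card_le_card_of_injOn (fun k => e.symm (w k))
    · intro k hk
      have hwk := hw k hk
      simp only [hT, Finset.mem_coe, Finset.mem_filter, Finset.mem_univ, true_and]
      have hvv : v (e.symm (w k)) = w k := e.apply_symm_apply (w k)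
      rw [hvv]
      exact hdeg (w k) hwk.2
    · intro k1 h1 k2 h2 heq
      have hww : w k1 = w k2 := by
        have := congrArg e heq
        simpa using this
      rw [← (hw k1 h1).1, ← (hw k2 h2).1, hww]
  have hex : ∃ j ∈ T, K.card - 1 ≤ (j : ℕ) := by
    by_contra hcon
    push_neg at hcon
    have hle : T.card ≤ K.card - 1 := by
      calc T.card = (T.image Fin.val).card :=
            (Finset.card_image_of_injective T Fin.val_injective).symm
        _ ≤ (Finset.range (K.card - 1)).card := Finset.card_le_card (by
            intro a ha
            obtain ⟨j, hj, rfl⟩ := Finset.mem_image.mp ha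
            exact Finset.mem_range.mpr (hcon j hj))
        _ = K.card - 1 := Finset.card_range _
    omega
  obtain ⟨j, hjT, hj⟩ := hex
  have hjn : K.card - 1 < Fintype.card V := lt_of_le_of_lt hj j.isLt
  have hdi : (K.card - 1 : ℕ) ≤ G.degree (v ⟨K.card - 1, hjn⟩) := by
    have h1 : K.card - 1 ≤ G.degree (v j) := by
      simpa [hT] using (Finset.mem_filter.mp hjT).2
    exact h1.trans (hsort ⟨K.card - 1, hjn⟩ j (by simpa [Fin.le_def] using hj))
  apply le_csSup
  · exact ⟨Fintype.card V, by rintro x ⟨i, rfl, -⟩; exact i.isLt⟩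
  · exact ⟨⟨K.card - 1, hjn⟩, (Nat.succ_pred_eq_of_pos hpos).symm, hdi⟩
end

section
/- Suppose x is a feasible 0-1 solution of the representatives formulation for b-coloring, i.e., for each vertex u exactly one vertex in its closed anti-neighborhood represents it, a vertex representing two adjacent anti-neighbors must be a representative, and any vertex giving a color must be a representative. Then the assignment c(u) = the unique v with x_{vu} = 1 is a proper coloring of G. -/
open Finset SimpleGraph

variable {V : Type*}

theorem stmt_13 [Fintype V] [DecidableEq V] (G : SimpleGraph V) [DecidableRel G.Adj]
    (x : V → V → ℕ)
    (hbin : ∀ u v : V, x u v = 0 ∨ x u v = 1)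
    (hdom : ∀ u v : V, G.Adj v u → x v u = 0)
    (hone : ∀ u : V, ∑ v ∈ Finset.univ.filter (fun v => ¬ G.Adj u v), x v u = 1)
    (hpair : ∀ u v w : V, ¬ G.Adj u v → v ≠ u → ¬ G.Adj u w → w ≠ u → G.Adj v w →
      x u v + x u w ≤ x u u)
    (hiso : ∀ u v : V, ¬ G.Adj u v → v ≠ u →
      (∀ w : V, ¬ G.Adj u w → w ≠ u → ¬ G.Adj v w) → x u v ≤ x u u) :
    ∀ c : V → V, (∀ u, x (c u) u = 1) →
      ∀ u u' : V, G.Adj u u' → c u ≠ c u' := by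
  intro c hc u u' hadj heq
  set r := c u with hr
  have h1 : x r u = 1 := hc u
  have h2 : x r u' = 1 := by rw [heq]; exact hc u'
  have hru : ¬ G.Adj r u := fun h => by simp [hdom u r h] at h1
  have hru' : ¬ G.Adj r u' := fun h => by simp [hdom u' r h] at h2
  have hur : u ≠ r := fun h => by
    rw [← h] at h2; simp [hdom u' u hadj] at h2
  have hu'r : u' ≠ r := fun h => by
    rw [← h] at h1; simp [hdom u u' hadj.symm] at h1
  have := hpair r u u' hru hur hru' hu'r hadj
  rw [h1, h2] at this
  rcases hbin r r with h | h <;> omega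
end

section
/- For the cycle C_n with n ≥ 5, χ_b(C_n) = 3. -/
open Finset SimpleGraph

variable {V : Type*}

/-- auxiliary color function -/
def cval (n i : ℕ) : ℕ := if i = n - 1 ∧ n % 3 ≠ 0 then 1 else i % 3

lemma cval_step {n : ℕ} (hn : 5 ≤ n) {a b : ℕ} (ha : a < n) (hb : b < n)
    (hab : b = (a + 1) % n) : cval n a ≠ cval n b := by
  have hcase : b = a + 1 ∨ (a = n - 1 ∧ b = 0) := by
    rcases Nat.lt_or_ge (a + 1) n with h | h
    · left; rw [Nat.mod_eq_of_lt h] at hab; exact hab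
    · right
      have he : a + 1 = n := by omega
      constructor
      · omega
      · rw [hab, he, Nat.mod_self]
  unfold cval
  split_ifs <;> omega

lemma adj_succ {n : ℕ} (hn : 2 ≤ n) {a b : Fin n} (h : a.val + 1 = b.val) :
    (SimpleGraph.cycleGraph n).Adj a b := by
  haveI : NeZero n := ⟨by omega⟩
  rw [SimpleGraph.cycleGraph_adj']
  right
  rw [Fin.sub_def]
  have h1 : n - a.val + b.val = n + 1 := by
    have := a.isLt; omega
  simp only [h1]
  rw [Nat.add_mod_left, Nat.mod_eq_of_lt (by omega)]

lemma one_val {n : ℕ} [NeZero n] (hn : 2 ≤ n) : ((1 : Fin n)).val = 1 := by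
  rw [Fin.val_one', Nat.mod_eq_of_lt (by omega)]

lemma neighbor_cases {n : ℕ} [NeZero n] (hn : 2 ≤ n) {v u : Fin n}
    (h : (SimpleGraph.cycleGraph n).Adj v u) : u = v - 1 ∨ u = v + 1 := by
  rw [SimpleGraph.cycleGraph_adj'] at h
  rcases h with h | h
  · left
    have hvu : v - u = 1 := Fin.ext (by rw [one_val hn]; exact h)
    rw [← hvu, sub_sub_cancel]
  · right
    have hvu : u - v = 1 := Fin.ext (by rw [one_val hn]; exact h)
    rw [← hvu]; abel

theorem stmt_18 (n : ℕ) (hn : 5 ≤ n) :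
    bChromatic (SimpleGraph.cycleGraph n) = 3 := by
  haveI : NeZero n := ⟨by omega⟩
  set S : Set ℕ := {k | ∃ c K, Finset.card K = k ∧ IsBColoring (SimpleGraph.cycleGraph n) c K}
    with hS
  -- upper bound
  have hub : ∀ k ∈ S, k ≤ 3 := by
    rintro k ⟨c, K, rfl, ⟨⟨hmem, hprop⟩, hb⟩⟩
    by_contra hcon
    push_neg at hcon
    have hKne : K.Nonempty := Finset.card_pos.mp (by omega)
    obtain ⟨k0, hk0⟩ := hKne
    obtain ⟨v, hv, hbv⟩ := hb k0 hk0
    have hsub : K.erase (c v) ⊆ Finset.image c {v - 1, v + 1} := by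
      intro k hk
      obtain ⟨hne, hkK⟩ := Finset.mem_erase.mp hk
      obtain ⟨u, hadj, hcu⟩ := hbv k hkK hne
      rcases neighbor_cases (by omega) hadj with h | h <;>
        exact Finset.mem_image.mpr ⟨u, by simp [h], hcu⟩
    have h1 : (K.erase (c v)).card = K.card - 1 := Finset.card_erase_of_mem (hmem v)
    have h2 : (Finset.image c ({v - 1, v + 1} : Finset (Fin n))).card ≤ 2 :=
      le_trans Finset.card_image_le (le_trans (Finset.card_insert_le _ _) (by simp))
    have := Finset.card_le_card hsub
    omega
  -- the witness coloring
  have hmem3 : 3 ∈ S := by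
    refine ⟨fun v => cval n v.val, {0, 1, 2}, by decide, ?_⟩
    have hcv4 : ∀ j : ℕ, j ≤ 4 → ∀ h : j < n, cval n j = j % 3 := by
      intro j hj h
      unfold cval
      split_ifs <;> omega
    have hadj : ∀ (a b : ℕ) (ha : a < n) (hb : b < n), a + 1 = b →
        (SimpleGraph.cycleGraph n).Adj ⟨a, ha⟩ ⟨b, hb⟩ :=
      fun a b ha hb h => adj_succ (by omega) h
    constructor
    · constructor
      · intro v
        simp only [Finset.mem_insert, Finset.mem_singleton]
        unfold cval
        split_ifs <;> omega
      · intro u v huv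
        rcases neighbor_cases (by omega) huv with h | h
        · -- v = u - 1, so u = v + 1
          have hu : u = v + 1 := by rw [h, sub_add_cancel]
          have : (u : Fin n).val = (v.val + 1) % n := by
            rw [hu, Fin.add_def, one_val (by omega)]
          exact (cval_step hn v.isLt u.isLt this).symm
        · have : (v : Fin n).val = (u.val + 1) % n := by
            rw [h, Fin.add_def, one_val (by omega)]
          exact cval_step hn u.isLt v.isLt this
    · intro k hk
      have h0 : (0:ℕ) < n := by omega
      have h1 : (1:ℕ) < n := by omega
      have h2 : (2:ℕ) < n := by omega
      have h3 : (3:ℕ) < n := by omega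
      have h4 : (4:ℕ) < n := by omega
      simp only [Finset.mem_insert, Finset.mem_singleton] at hk
      rcases hk with rfl | rfl | rfl
      · -- color 0 : b-vertex ⟨3⟩
        refine ⟨⟨3, h3⟩, hcv4 3 (by omega) h3, ?_⟩
        intro k hkK hne
        simp only [hcv4 3 (by omega) h3] at hne
        simp only [Finset.mem_insert, Finset.mem_singleton] at hkK
        rcases hkK with rfl | rfl | rfl
        · omega
        · exact ⟨⟨4, h4⟩, hadj 3 4 h3 h4 rfl, hcv4 4 (by omega) h4⟩
        · exact ⟨⟨2, h2⟩, (hadj 2 3 h2 h3 rfl).symm, hcv4 2 (by omega) h2⟩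
      · -- color 1 : b-vertex ⟨1⟩
        refine ⟨⟨1, h1⟩, hcv4 1 (by omega) h1, ?_⟩
        intro k hkK hne
        simp only [hcv4 1 (by omega) h1] at hne
        simp only [Finset.mem_insert, Finset.mem_singleton] at hkK
        rcases hkK with rfl | rfl | rfl
        · exact ⟨⟨0, h0⟩, (hadj 0 1 h0 h1 rfl).symm, hcv4 0 (by omega) h0⟩
        · omega
        · exact ⟨⟨2, h2⟩, hadj 1 2 h1 h2 rfl, hcv4 2 (by omega) h2⟩
      · -- color 2 : b-vertex ⟨2⟩
        refine ⟨⟨2, h2⟩, hcv4 2 (by omega) h2, ?_⟩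
        intro k hkK hne
        simp only [hcv4 2 (by omega) h2] at hne
        simp only [Finset.mem_insert, Finset.mem_singleton] at hkK
        rcases hkK with rfl | rfl | rfl
        · exact ⟨⟨3, h3⟩, hadj 2 3 h2 h3 rfl, hcv4 3 (by omega) h3⟩
        · exact ⟨⟨1, h1⟩, (hadj 1 2 h1 h2 rfl).symm, hcv4 1 (by omega) h1⟩
        · omega
  refine le_antisymm (csSup_le ⟨3, hmem3⟩ hub) (le_csSup ⟨3, fun x hx => hub x hx⟩ hmem3)
end
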